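/- Let j ∈ ℕ, N = 2j+1, and t : M³ → ℂ, with φ its discrete Fourier presentation. Then the tetrahedron invariant satisfies Σ_{a,b,c,a',b',c'=0}^{N−1} φ_{abc}·φ_{ab'c'}·φ_{a'bc'}·φ_{a'b'c} = N⁶·Σ over (n_a, n_b, n_c, n_{a'}, n_{b'}, n_{c'}) ∈ M⁶ of (−1)^{(j−|n_a|)+(j−|n_b|)+(j−|n_c|)+(j−|n_{a'}|)+(j−|n_{b'}|)+(j−|n_{c'}|)}·t(n_a, n_b, n_c)·t(−n_a, n_{b'}, n_{c'})·t(n_{a'}, −n_b, −n_{c'})·t(−n_{a'}, −n_{b'}, −n_c). -/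

import Mathlib

/-!
Write `φ = (F ⊗ F ⊗ F) ψ`, where `ψ = t · i^{3j-|m₁|-|m₂|-|m₃|}` and `F` is the discrete Fourier
transform with kernel `ζ^{am}`, `ζ = exp(-2πi/N)`. Expanding the four copies of `φ` and summing
over each of the six indices `a, …, c'` first turns every edge of the tetrahedron into the pairing
`Σ_a ζ^{a(m+n)}`, which for `|m|, |n| ≤ j` equals `N δ_{n,-m}` because `|m + n| < N`. The six
deltas pin the twelve summation variables down to six free ones, and the four phase factors
combine to `i^{2 Σ (j-|n|)} = (-1)^{Σ (j-|n|)}`.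
-/

open Finset

/-- The discrete Fourier presentation of `t : M³ → ℂ`, where `M = {-j, …, j}`:
`φ_{abc} = Σ_{m∈M³} t(m₁,m₂,m₃) i^{3j-|m₁|-|m₂|-|m₃|} exp(-(2πi/N)(a m₁ + b m₂ + c m₃))`. -/
noncomputable def fourierPresentation (j N : ℕ) (t : ℤ → ℤ → ℤ → ℂ) :
    ℤ → ℤ → ℤ → ℂ :=
  fun a b c =>
    ∑ m1 ∈ Finset.Icc (-(j : ℤ)) (j : ℤ), ∑ m2 ∈ Finset.Icc (-(j : ℤ)) (j : ℤ),
      ∑ m3 ∈ Finset.Icc (-(j : ℤ)) (j : ℤ),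
        t m1 m2 m3 * Complex.I ^ (3 * (j : ℤ) - |m1| - |m2| - |m3|) *
          Complex.exp (-(2 * (Real.pi : ℂ) * Complex.I / (N : ℂ)) *
            ((a : ℂ) * (m1 : ℂ) + (b : ℂ) * (m2 : ℂ) + (c : ℂ) * (m3 : ℂ)))

theorem Finset.sum_mul_sum_mul_sum_mul_sum {α β γ δ R : Type*} [NonUnitalNonAssocSemiring R]
    (s : Finset α) (t : Finset β) (u : Finset γ) (v : Finset δ)
    (f : α → R) (g : β → R) (h : γ → R) (k : δ → R) :
    (∑ i ∈ s, f i) * (∑ j ∈ t, g j) * (∑ l ∈ u, h l) * (∑ m ∈ v, k m) =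
      ∑ i ∈ s, ∑ j ∈ t, ∑ l ∈ u, ∑ m ∈ v, f i * g j * h l * k m := by
  simp only [← Finset.mul_sum, ← Finset.sum_mul]

theorem Fintype.sum_mul_sum₆ {ι R : Type*} [Fintype ι] [NonUnitalNonAssocSemiring R]
    (f₁ f₂ f₃ f₄ f₅ f₆ : ι → R) :
    ∑ a, ∑ b, ∑ c, ∑ d, ∑ e, ∑ g, f₁ a * f₂ b * f₃ c * f₄ d * f₅ e * f₆ g =
      (∑ a, f₁ a) * (∑ b, f₂ b) * (∑ c, f₃ c) * (∑ d, f₄ d) * (∑ e, f₅ e) * ∑ g, f₆ g := by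
  simp only [← Finset.mul_sum, ← Finset.sum_mul]

section Tetrahedron

variable {ι κ R : Type*} [CommSemiring R]

def kernelTransform (s : Finset κ) (e : ι → κ → R) (ψ : κ → κ → κ → R) (a b c : ι) : R :=
  ∑ m ∈ s ×ˢ s ×ˢ s, ψ m.1 m.2.1 m.2.2 * (e a m.1 * e b m.2.1 * e c m.2.2)

variable [Fintype ι]

def tetrahedron (φ : ι → ι → ι → R) : R :=
  ∑ a, ∑ b, ∑ c, ∑ a', ∑ b', ∑ c', φ a b c * φ a b' c' * φ a' b c' * φ a' b' c

def kernelPairing (e : ι → κ → R) (m n : κ) : R := ∑ x, e x m * e x n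

theorem tetrahedron_kernelTransform (s : Finset κ) (e : ι → κ → R) (ψ : κ → κ → κ → R) :
    tetrahedron (kernelTransform s e ψ) =
      ∑ m ∈ s ×ˢ s ×ˢ s, ∑ n ∈ s ×ˢ s ×ˢ s, ∑ p ∈ s ×ˢ s ×ˢ s, ∑ q ∈ s ×ˢ s ×ˢ s,
        ψ m.1 m.2.1 m.2.2 * ψ n.1 n.2.1 n.2.2 * ψ p.1 p.2.1 p.2.2 * ψ q.1 q.2.1 q.2.2 *
          (kernelPairing e m.1 n.1 * kernelPairing e m.2.1 p.2.1 * kernelPairing e m.2.2 q.2.2 *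
            kernelPairing e p.1 q.1 * kernelPairing e n.2.1 q.2.1 *
            kernelPairing e n.2.2 p.2.2) := by
  simp only [tetrahedron, kernelTransform, Finset.sum_mul_sum_mul_sum_mul_sum]
  simp (maxSteps := 1000000) only [Finset.sum_comm (s := (univ : Finset ι)) (t := s ×ˢ s ×ˢ s)]
  refine sum_congr rfl fun m _ => sum_congr rfl fun n _ => sum_congr rfl fun p _ =>
    sum_congr rfl fun q _ => ?_
  simp only [kernelPairing]
  rw [← Fintype.sum_mul_sum₆]
  simp only [Finset.mul_sum]
  refine sum_congr rfl fun a _ => sum_congr rfl fun b _ => sum_congr rfl fun c _ =>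
    sum_congr rfl fun a' _ => sum_congr rfl fun b' _ => sum_congr rfl fun c' _ => ?_
  ring

end Tetrahedron

theorem sum_tetrahedral_of_kernel_eq_reflection {κ R : Type*} [CommSemiring R] [InvolutiveNeg κ]
    [DecidableEq κ] (s : Finset κ) (hs : ∀ m ∈ s, -m ∈ s) (K : κ → κ → R) (c : R)
    (hK : ∀ m ∈ s, ∀ n ∈ s, K m n = if n = -m then c else 0) (ψ : κ → κ → κ → R) :
    ∑ m ∈ s ×ˢ s ×ˢ s, ∑ n ∈ s ×ˢ s ×ˢ s, ∑ p ∈ s ×ˢ s ×ˢ s, ∑ q ∈ s ×ˢ s ×ˢ s,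
        ψ m.1 m.2.1 m.2.2 * ψ n.1 n.2.1 n.2.2 * ψ p.1 p.2.1 p.2.2 * ψ q.1 q.2.1 q.2.2 *
          (K m.1 n.1 * K m.2.1 p.2.1 * K m.2.2 q.2.2 * K p.1 q.1 * K n.2.1 q.2.1 * K n.2.2 p.2.2) =
      c ^ 6 * ∑ a ∈ s, ∑ b ∈ s, ∑ c ∈ s, ∑ a' ∈ s, ∑ b' ∈ s, ∑ c' ∈ s,
        ψ a b c * ψ (-a) b' c' * ψ a' (-b) (-c') * ψ (-a') (-b') (-c) := by
  -- The kernels vanish off the image of `param`, and on it each of them equals `c`.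
  let param : κ × κ × κ × κ × κ × κ → (κ × κ × κ) × (κ × κ × κ) × (κ × κ × κ) × (κ × κ × κ) :=
    fun ⟨a, b, c, a', b', c'⟩ => ((a, b, c), (-a, b', c'), (a', -b, -c'), (-a', -b', -c))
  have param_inj : Function.Injective param := by
    rintro ⟨a, b, c, a', b', c'⟩ ⟨_, _, _, _, _, _⟩ h
    simp_all [param]
  simp only [← sum_product', mul_sum]
  rw [← sum_subset (s₁ := (s ×ˢ s ×ˢ s ×ˢ s ×ˢ s ×ˢ s).image param), sum_image param_inj.injOn]
  · refine sum_congr rfl ?_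
    rintro ⟨a, b, c, a', b', c'⟩ hu
    simp only [mem_product] at hu
    obtain ⟨ha, hb, hc, ha', hb', hc'⟩ := hu
    dsimp only [param]
    rw [hK _ ha _ (hs _ ha), hK _ hb _ (hs _ hb), hK _ hc _ (hs _ hc), hK _ ha' _ (hs _ ha'),
      hK _ hb' _ (hs _ hb'), hK _ hc' _ (hs _ hc')]
    simp only [if_pos]
    ring
  · rw [image_subset_iff]
    rintro ⟨a, b, c, a', b', c'⟩ hu
    simp only [mem_product] at hu ⊢
    obtain ⟨ha, hb, hc, ha', hb', hc'⟩ := hu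
    exact ⟨⟨ha, hb, hc⟩, ⟨hs _ ha, hb', hc'⟩, ⟨ha', hs _ hb, hs _ hc'⟩,
      hs _ ha', hs _ hb', hs _ hc⟩
  · rintro ⟨⟨m₁, m₂, m₃⟩, ⟨n₁, n₂, n₃⟩, ⟨p₁, p₂, p₃⟩, ⟨q₁, q₂, q₃⟩⟩ hw hnot
    simp only [mem_product] at hw
    obtain ⟨⟨hm₁, hm₂, hm₃⟩, ⟨hn₁, hn₂, hn₃⟩, ⟨hp₁, hp₂, hp₃⟩, ⟨hq₁, hq₂, hq₃⟩⟩ := hw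
    rw [hK _ hm₁ _ hn₁, hK _ hm₂ _ hp₂, hK _ hm₃ _ hq₃, hK _ hp₁ _ hq₁, hK _ hn₂ _ hq₂,
      hK _ hn₃ _ hp₃]
    simp only [ite_zero_mul_ite_zero]
    rw [mul_ite, mul_zero, if_neg]
    rintro ⟨⟨⟨⟨⟨rfl, rfl⟩, rfl⟩, rfl⟩, rfl⟩, rfl⟩
    exact hnot (mem_image.2
      ⟨(m₁, m₂, m₃, p₁, n₂, n₃), by simp [hm₁, hm₂, hm₃, hp₁, hn₂, hn₃], rfl⟩)

theorem IsPrimitiveRoot.sum_fin_zpow_mul {K : Type*} [Field K] {ζ : K} {N : ℕ}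
    (hζ : IsPrimitiveRoot ζ N) (k : ℤ) :
    ∑ a : Fin N, ζ ^ (((a : ℕ) : ℤ) * k) = if (N : ℤ) ∣ k then (N : K) else 0 := by
  have hpow : ∀ a : Fin N, ζ ^ (((a : ℕ) : ℤ) * k) = (ζ ^ k) ^ (a : ℕ) := fun a => by
    rw [mul_comm, zpow_mul, zpow_natCast]
  simp only [hpow, Fin.sum_univ_eq_sum_range (fun i => (ζ ^ k) ^ i)]
  split_ifs with hk
  · simp [(hζ.zpow_eq_one_iff_dvd k).2 hk]
  · have hne : ζ ^ k - 1 ≠ 0 := sub_ne_zero.2 fun h => hk ((hζ.zpow_eq_one_iff_dvd k).1 h)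
    have hN : (ζ ^ k) ^ N = 1 := by rw [← zpow_natCast, ← zpow_mul, mul_comm, zpow_mul,
      zpow_natCast, hζ.pow_eq_one, one_zpow]
    exact (mul_eq_zero.1 (by rw [geom_sum_mul, hN, sub_self])).resolve_right hne

theorem IsPrimitiveRoot.kernelPairing_zpow {K : Type*} [Field K] {ζ : K} {N : ℕ}
    (hζ : IsPrimitiveRoot ζ N) {m n : ℤ} (hmn : |m + n| < N) :
    kernelPairing (fun (x : Fin N) (m : ℤ) => ζ ^ (((x : ℕ) : ℤ) * m)) m n =
      if n = -m then (N : K) else 0 := by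
  have hN : (0 : ℤ) < N := (abs_nonneg _).trans_lt hmn
  have hdvd : (N : ℤ) ∣ m + n ↔ n = -m :=
    ⟨fun h => by linarith [Int.eq_zero_of_abs_lt_dvd h hmn], by rintro rfl; simp⟩
  simp only [kernelPairing, ← zpow_add₀ (hζ.ne_zero (by omega)), ← mul_add,
    hζ.sum_fin_zpow_mul, hdvd]

theorem Complex.I_zpow_two_mul (k : ℤ) : Complex.I ^ (2 * k) = (-1) ^ k := by
  rw [zpow_mul, zpow_two, Complex.I_mul_I]

noncomputable def phased (j : ℕ) (t : ℤ → ℤ → ℤ → ℂ) (m₁ m₂ m₃ : ℤ) : ℂ :=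
  t m₁ m₂ m₃ * Complex.I ^ (3 * (j : ℤ) - |m₁| - |m₂| - |m₃|)

theorem phased_tetrahedral_product (j : ℕ) (t : ℤ → ℤ → ℤ → ℂ) (a b c a' b' c' : ℤ) :
    phased j t a b c * phased j t (-a) b' c' * phased j t a' (-b) (-c') *
        phased j t (-a') (-b') (-c) =
      (-1 : ℂ) ^ (((j : ℤ) - |a|) + ((j : ℤ) - |b|) + ((j : ℤ) - |c|)
          + ((j : ℤ) - |a'|) + ((j : ℤ) - |b'|) + ((j : ℤ) - |c'|)) *
        (t a b c * t (-a) b' c' * t a' (-b) (-c') * t (-a') (-b') (-c)) := by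
  rw [← Complex.I_zpow_two_mul]
  simp only [phased, abs_neg]
  have hI : Complex.I ^ (3 * (j : ℤ) - |a| - |b| - |c|) *
      Complex.I ^ (3 * (j : ℤ) - |a| - |b'| - |c'|) *
      Complex.I ^ (3 * (j : ℤ) - |a'| - |b| - |c'|) *
      Complex.I ^ (3 * (j : ℤ) - |a'| - |b'| - |c|) =
      Complex.I ^ (2 * (((j : ℤ) - |a|) + ((j : ℤ) - |b|) + ((j : ℤ) - |c|)
          + ((j : ℤ) - |a'|) + ((j : ℤ) - |b'|) + ((j : ℤ) - |c'|))) := by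
    simp only [← zpow_add₀ Complex.I_ne_zero]
    ring_nf
  linear_combination (t a b c * t (-a) b' c' * t a' (-b) (-c') * t (-a') (-b') (-c)) * hI

noncomputable def fourierKernel (N : ℕ) (x : Fin N) (m : ℤ) : ℂ :=
  Complex.exp (-(2 * (Real.pi : ℂ) * Complex.I / N)) ^ (((x : ℕ) : ℤ) * m)

theorem fourierPresentation_eq_kernelTransform (j N : ℕ) (t : ℤ → ℤ → ℤ → ℂ) (a b c : Fin N) :
    fourierPresentation j N t a b c =
      kernelTransform (Icc (-(j : ℤ)) j) (fourierKernel N) (phased j t) a b c := by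
  simp only [fourierPresentation, kernelTransform, fourierKernel, phased, sum_product]
  refine sum_congr rfl fun m₁ _ => sum_congr rfl fun m₂ _ => sum_congr rfl fun m₃ _ => ?_
  simp only [← Complex.exp_int_mul, ← Complex.exp_add]
  push_cast
  ring_nf

/-- The tetrahedron invariant in direct space equals `N⁶` times the corresponding
contraction of `t` with itself through the invariant metric. -/
theorem tetrahedron_invariant_fourier (j N : ℕ) (hN : N = 2 * j + 1)
    (t : ℤ → ℤ → ℤ → ℂ)
    (φ : ℤ → ℤ → ℤ → ℂ) (hφ : φ = fourierPresentation j N t) :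
    ∑ a : Fin N, ∑ b : Fin N, ∑ c : Fin N, ∑ a' : Fin N, ∑ b' : Fin N, ∑ c' : Fin N,
        φ ((a : ℕ) : ℤ) ((b : ℕ) : ℤ) ((c : ℕ) : ℤ) *
          φ ((a : ℕ) : ℤ) ((b' : ℕ) : ℤ) ((c' : ℕ) : ℤ) *
          φ ((a' : ℕ) : ℤ) ((b : ℕ) : ℤ) ((c' : ℕ) : ℤ) *
          φ ((a' : ℕ) : ℤ) ((b' : ℕ) : ℤ) ((c : ℕ) : ℤ)
      = (N : ℂ) ^ 6 *
          ∑ na ∈ Finset.Icc (-(j : ℤ)) (j : ℤ), ∑ nb ∈ Finset.Icc (-(j : ℤ)) (j : ℤ),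
            ∑ nc ∈ Finset.Icc (-(j : ℤ)) (j : ℤ), ∑ na' ∈ Finset.Icc (-(j : ℤ)) (j : ℤ),
              ∑ nb' ∈ Finset.Icc (-(j : ℤ)) (j : ℤ), ∑ nc' ∈ Finset.Icc (-(j : ℤ)) (j : ℤ),
                (-1 : ℂ) ^ (((j : ℤ) - |na|) + ((j : ℤ) - |nb|) + ((j : ℤ) - |nc|)
                    + ((j : ℤ) - |na'|) + ((j : ℤ) - |nb'|) + ((j : ℤ) - |nc'|)) *
                  (t na nb nc * t (-na) nb' nc' * t na' (-nb) (-nc') *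
                    t (-na') (-nb') (-nc)) := by
  subst hφ
  have hζ : IsPrimitiveRoot (Complex.exp (-(2 * (Real.pi : ℂ) * Complex.I / N))) N := by
    rw [Complex.exp_neg]
    exact (Complex.isPrimitiveRoot_exp N (by omega)).inv
  have hK : ∀ m ∈ Icc (-(j : ℤ)) j, ∀ n ∈ Icc (-(j : ℤ)) j,
      kernelPairing (fourierKernel N) m n = if n = -m then (N : ℂ) else 0 := fun m hm n hn => by
    rw [mem_Icc] at hm hn
    exact hζ.kernelPairing_zpow (abs_lt.2 ⟨by omega, by omega⟩)
  simp only [fourierPresentation_eq_kernelTransform]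
  have hneg : ∀ m ∈ Icc (-(j : ℤ)) j, -m ∈ Icc (-(j : ℤ)) j := fun m hm => by
    rw [mem_Icc] at hm ⊢
    omega
  rw [← tetrahedron, tetrahedron_kernelTransform,
    sum_tetrahedral_of_kernel_eq_reflection _ hneg _ _ hK]
  simp only [phased_tetrahedral_product]
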